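/- For m ∈ ℤ, r, s ∈ 1/2 + ℤ, λ ∈ ℂ*, α ∈ ℂ, t = ±1, the operators on ℂ[x] given by L_m f(x) = λ^m (x + mα) f(x + m) and I_r f(x) = −2 t^{2r} λ^r α f(x + r) satisfy [L_m, I_r] f = −r I_{m+r} f and [I_r, I_s] f = 0 for all f ∈ ℂ[x]. -/

import Mathlib

open Polynomial

/- Half-integers are encoded by their doubles: `r ∈ 1/2 + ℤ` corresponds to an odd
integer `a = 2r`; `λ^r` means `ν^a` for a fixed square root `ν` of `λ`, and
`t^{2r} = t^a`. -/

/-- `L_m f(x) = λ^m (x + m α) f(x + m)` with `λ = ν²`. -/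
noncomputable def Lw (nu α : ℂ) (m : ℤ) (f : Polynomial ℂ) : Polynomial ℂ :=
  (nu ^ 2) ^ m • ((X + C ((m : ℂ) * α)) * f.comp (X + C (m : ℂ)))

/-- `I_r f(x) = −2 t^{2r} λ^r α f(x + r)` for `r = a/2`, `a` odd. -/
noncomputable def Ie (t nu α : ℂ) (a : ℤ) (f : Polynomial ℂ) : Polynomial ℂ :=
  (-2 * t ^ a * nu ^ a * α) • f.comp (X + C ((a : ℂ) / 2))

/-
Both operators are scalar multiples of translations `f ↦ f(x + c)`, which commute and compose
additively (`Polynomial.taylor_taylor`). In `[L_m, I_r]` the translations therefore cancel and only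
the multiplier survives: `(x + mα) - (x + r + mα) = -r`. What remains is the scalar identity
`λ^m · t^{2r} λ^r = t^{2(r+m)} λ^{r+m}`, which uses `t² = 1` and `λ^m = (ν²)^m`.
-/

lemma Ie_eq_smul_taylor (t nu α : ℂ) (a : ℤ) (f : ℂ[X]) :
    Ie t nu α a f = (-2 * t ^ a * nu ^ a * α) • taylor ((a : ℂ) / 2) f :=
  rfl

lemma Lw_eq_smul_taylor (nu α : ℂ) (m : ℤ) (f : ℂ[X]) :
    Lw nu α m f = (nu ^ 2) ^ m • ((X + C ((m : ℂ) * α)) * taylor (m : ℂ) f) :=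
  rfl

lemma Lw_Ie_sub_Ie_Lw (t nu α : ℂ) (m a : ℤ) (f : ℂ[X]) :
    Lw nu α m (Ie t nu α a f) - Ie t nu α a (Lw nu α m f)
      = (-(a : ℂ) / 2) • (nu ^ 2) ^ m • Ie t nu α a (taylor (m : ℂ) f) := by
  simp only [Ie_eq_smul_taylor, Lw_eq_smul_taylor, map_smul, taylor_mul, map_add, taylor_X,
    taylor_C, taylor_taylor, add_comm (m : ℂ)]
  simp only [smul_eq_C_mul, C_mul, C_neg, neg_div]
  ring

lemma Ie_add_two_mul {t nu : ℂ} (ht : t ^ 2 = 1) (hnu : nu ≠ 0) (α : ℂ) (m a : ℤ) (f : ℂ[X]) :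
    Ie t nu α (a + 2 * m) f = (nu ^ 2) ^ m • Ie t nu α a (taylor (m : ℂ) f) := by
  have ht0 : t ≠ 0 := by rintro rfl; norm_num at ht
  have ht_zpow : t ^ (a + 2 * m) = t ^ a := by
    rw [zpow_add₀ ht0, zpow_mul, zpow_ofNat, ht, one_zpow, mul_one]
  have hnu_zpow : nu ^ (a + 2 * m) = nu ^ a * (nu ^ 2) ^ m := by
    rw [zpow_add₀ hnu, zpow_mul, zpow_ofNat]
  have h_shift : ((a + 2 * m : ℤ) : ℂ) / 2 = a / 2 + m := by
    push_cast
    ring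
  rw [Ie_eq_smul_taylor, Ie_eq_smul_taylor, taylor_taylor, smul_smul, ht_zpow, hnu_zpow, h_shift]
  congr 1
  ring

lemma Ie_comm (t nu α : ℂ) (a b : ℤ) (f : ℂ[X]) :
    Ie t nu α a (Ie t nu α b f) = Ie t nu α b (Ie t nu α a f) := by
  simp only [Ie_eq_smul_taylor, map_smul, taylor_taylor, smul_smul, add_comm, mul_comm]

theorem stmt3_general (t nu α : ℂ) (ht : t = 1 ∨ t = -1) (hnu : nu ≠ 0)
    (m a b : ℤ) (f : Polynomial ℂ) :
    Lw nu α m (Ie t nu α a f) - Ie t nu α a (Lw nu α m f)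
        = (-(a : ℂ) / 2) • Ie t nu α (a + 2 * m) f ∧
    Ie t nu α a (Ie t nu α b f) - Ie t nu α b (Ie t nu α a f) = 0 :=
  ⟨by rw [Lw_Ie_sub_Ie_Lw, Ie_add_two_mul (sq_eq_one_iff.mpr ht) hnu],
    by rw [Ie_comm, sub_self]⟩

theorem stmt3 (t nu α : ℂ) (ht : t = 1 ∨ t = -1) (hnu : nu ≠ 0)
    (m a b : ℤ) (ha : Odd a) (hb : Odd b) (f : Polynomial ℂ) :
    Lw nu α m (Ie t nu α a f) - Ie t nu α a (Lw nu α m f)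
        = (-(a : ℂ) / 2) • Ie t nu α (a + 2 * m) f ∧
    Ie t nu α a (Ie t nu α b f) - Ie t nu α b (Ie t nu α a f) = 0 :=
  stmt3_general t nu α ht hnu m a b f
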